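/- arXiv:2303.14607 — 4 statements merged into one kernel-verified Lean document; each statement's English description precedes it below -/
import Mathlib

section
/- Let f, g : ℝ → ℝ be continuous on [0,R] and strictly positive on (0,R], and suppose the ratio t ↦ f(t)/g(t) is non-increasing on (0,R]. Then for all real numbers S, r with 0 < S ≤ r ≤ R, one has (∫_r^R f(t) dt) · (∫_0^S g(t) dt) ≤ (∫_r^R g(t) dt) · (∫_0^S f(t) dt). -/
open intervalIntegral Set

/-- Gromov-type monotonicity lemma: if `f/g` is non-increasing on `(0, R]`, with `f, g`
continuous on `[0, R]` and strictly positive on `(0, R]`, then for `0 < S ≤ r ≤ R` the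
mass of `f` on the outer interval relative to the inner one is controlled by that of `g`. -/
theorem gromov_monotonicity (f g : ℝ → ℝ) (R : ℝ)
    (hf : ContinuousOn f (Set.Icc 0 R)) (hg : ContinuousOn g (Set.Icc 0 R))
    (hfpos : ∀ t ∈ Set.Ioc 0 R, 0 < f t) (hgpos : ∀ t ∈ Set.Ioc 0 R, 0 < g t)
    (hmono : AntitoneOn (fun t => f t / g t) (Set.Ioc 0 R))
    (S r : ℝ) (hS : 0 < S) (hSr : S ≤ r) (hrR : r ≤ R) :
    (∫ t in r..R, f t) * (∫ t in (0:ℝ)..S, g t) ≤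
      (∫ t in r..R, g t) * (∫ t in (0:ℝ)..S, f t) := by
  have hr0 : 0 < r := lt_of_lt_of_le hS hSr
  have hrmem : r ∈ Set.Ioc 0 R := ⟨hr0, hrR⟩
  set c : ℝ := f r / g r with hc
  -- integrability facts
  have hfi : ∀ a b : ℝ, 0 ≤ a → b ≤ R → a ≤ b → IntervalIntegrable f MeasureTheory.volume a b := by
    intro a b ha hb hab
    exact (hf.mono (fun x hx => by
      rcases hx with hx
      rw [Set.uIcc_of_le hab] at hx
      exact ⟨le_trans ha hx.1, le_trans hx.2 hb⟩)).intervalIntegrable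
  have hgi : ∀ a b : ℝ, 0 ≤ a → b ≤ R → a ≤ b → IntervalIntegrable g MeasureTheory.volume a b := by
    intro a b ha hb hab
    exact (hg.mono (fun x hx => by
      rcases hx with hx
      rw [Set.uIcc_of_le hab] at hx
      exact ⟨le_trans ha hx.1, le_trans hx.2 hb⟩)).intervalIntegrable
  have hS0 : (0:ℝ) ≤ S := hS.le
  have hSR : S ≤ R := le_trans hSr hrR
  -- pointwise comparisons
  have key1 : ∀ t ∈ Set.Icc r R, f t ≤ c * g t := by
    intro t ht
    have htmem : t ∈ Set.Ioc 0 R := ⟨lt_of_lt_of_le hr0 ht.1, ht.2⟩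
    have := hmono hrmem htmem ht.1
    have hgt := hgpos t htmem
    calc f t = (f t / g t) * g t := by field_simp
      _ ≤ c * g t := mul_le_mul_of_nonneg_right this hgt.le
  have key2 : ∀ t ∈ Set.Ioc 0 S, c * g t ≤ f t := by
    intro t ht
    have htmem : t ∈ Set.Ioc 0 R := ⟨ht.1, le_trans ht.2 hSR⟩
    have ht_le : t ≤ r := le_trans ht.2 hSr
    have := hmono htmem hrmem ht_le
    have hgt := hgpos t htmem
    calc c * g t ≤ (f t / g t) * g t := mul_le_mul_of_nonneg_right this hgt.le
      _ = f t := by field_simp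
  -- integral inequalities
  have h1 : (∫ t in r..R, f t) ≤ c * ∫ t in r..R, g t := by
    rw [← intervalIntegral.integral_const_mul]
    exact intervalIntegral.integral_mono_on hrR (hfi r R hr0.le le_rfl hrR)
      ((hgi r R hr0.le le_rfl hrR).const_mul c) key1
  have h2 : c * (∫ t in (0:ℝ)..S, g t) ≤ ∫ t in (0:ℝ)..S, f t := by
    rw [← intervalIntegral.integral_const_mul]
    apply intervalIntegral.integral_mono_ae_restrict hS0
      ((hgi 0 S le_rfl hSR hS0).const_mul c) (hfi 0 S le_rfl hSR hS0)
    have hzero : (MeasureTheory.volume.restrict (Set.Icc (0:ℝ) S)) {(0:ℝ)} = 0 :=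
      le_antisymm (le_trans (MeasureTheory.Measure.restrict_le_self _)
        (by simp)) zero_le
    filter_upwards [MeasureTheory.ae_restrict_mem measurableSet_Icc,
      MeasureTheory.measure_eq_zero_iff_ae_notMem.mp hzero] with t ht ht0
    have : t ∈ Set.Ioc 0 S := ⟨lt_of_le_of_ne ht.1 (by simpa using Ne.symm (by simpa using ht0)), ht.2⟩
    exact key2 t this
  have hgA : (0:ℝ) ≤ ∫ t in r..R, g t := by
    apply intervalIntegral.integral_nonneg hrR
    intro u hu
    exact (hgpos u ⟨lt_of_lt_of_le hr0 hu.1, hu.2⟩).le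
  have hgB : (0:ℝ) ≤ ∫ t in (0:ℝ)..S, g t := by
    apply intervalIntegral.integral_nonneg_of_ae_restrict hS0
    have hzero : (MeasureTheory.volume.restrict (Set.Icc (0:ℝ) S)) {(0:ℝ)} = 0 :=
      le_antisymm (le_trans (MeasureTheory.Measure.restrict_le_self _)
        (by simp)) zero_le
    filter_upwards [MeasureTheory.ae_restrict_mem measurableSet_Icc,
      MeasureTheory.measure_eq_zero_iff_ae_notMem.mp hzero] with t ht ht0
    have : t ∈ Set.Ioc 0 R := ⟨lt_of_le_of_ne ht.1 (by simpa using Ne.symm (by simpa using ht0)),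
      le_trans ht.2 hSR⟩
    exact (hgpos t this).le
  calc (∫ t in r..R, f t) * (∫ t in (0:ℝ)..S, g t)
      ≤ (c * ∫ t in r..R, g t) * (∫ t in (0:ℝ)..S, g t) :=
        mul_le_mul_of_nonneg_right h1 hgB
    _ = (∫ t in r..R, g t) * (c * ∫ t in (0:ℝ)..S, g t) := by ring
    _ ≤ (∫ t in r..R, g t) * (∫ t in (0:ℝ)..S, f t) :=
        mul_le_mul_of_nonneg_left h2 hgA
end

section
/- Let c > 0, K > 0, a > 0, b > 0, r > 0, s > 0 be real numbers. Then ∫_0^{r/a} (sinh(√(cK)·τ))^{1/c} dτ ≤ (b/a)^{1+1/c} · (r/s)^{1+1/c} · exp(√(K/c) · r/a) · ∫_0^{s/b} (sinh(√(cK)·τ))^{1/c} dτ. -/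
open Real

lemma sinh_le_self_mul_exp {z : ℝ} (_hz : 0 ≤ z) : Real.sinh z ≤ z * Real.exp z := by
  rw [Real.sinh_eq]
  have h1 : 1 - 2*z ≤ Real.exp (-(2*z)) := by
    have := Real.add_one_le_exp (-(2*z)); linarith
  have h2 : Real.exp (-(2*z)) = Real.exp (-z) * Real.exp (-z) := by
    rw [← Real.exp_add]; ring_nf
  have h3 : Real.exp (-z) * Real.exp z = 1 := by rw [← Real.exp_add]; simp
  have h4 : 0 < Real.exp z := Real.exp_pos z
  have h5 : 0 < Real.exp (-z) := Real.exp_pos _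
  nlinarith [sq_nonneg (Real.exp z - Real.exp (-z))]

lemma sinh_mul_le {l y : ℝ} (hl : 0 ≤ l) (hy : 0 ≤ y) :
    Real.sinh (l * y) ≤ l * Real.sinh y * Real.exp (l * y) := by
  have h1 : Real.sinh (l*y) ≤ (l*y) * Real.exp (l*y) := sinh_le_self_mul_exp (by positivity)
  have h2 : y ≤ Real.sinh y := Real.self_le_sinh_iff.2 hy
  have h3 : l * y * Real.exp (l*y) ≤ l * Real.sinh y * Real.exp (l*y) := by
    have := mul_le_mul_of_nonneg_left h2 hl
    exact mul_le_mul_of_nonneg_right (by linarith) (Real.exp_pos _).le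
  linarith

/-- Explicit ratio estimate for integrals of the model comparison density
`sinh(√(cK)·τ)^(1/c)`, quantifying Bishop–Gromov volume growth under the ε-range
curvature bound (inequality (3.10) in the paper). -/
theorem sinh_model_integral_ratio (c K a b r s : ℝ)
    (hc : 0 < c) (hK : 0 < K) (ha : 0 < a) (hb : 0 < b) (hr : 0 < r) (hs : 0 < s) :
    (∫ τ in (0:ℝ)..(r / a), Real.sinh (Real.sqrt (c * K) * τ) ^ (1 / c)) ≤
      (b / a) ^ (1 + 1 / c) * (r / s) ^ (1 + 1 / c) * Real.exp (Real.sqrt (K / c) * r / a) *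
        ∫ τ in (0:ℝ)..(s / b), Real.sinh (Real.sqrt (c * K) * τ) ^ (1 / c) := by
  set k := Real.sqrt (c * K) with hkdef
  have hk : 0 < k := Real.sqrt_pos.2 (by positivity)
  set T := s / b with hTdef
  have hT : 0 < T := div_pos hs hb
  set l := (b * r) / (a * s) with hldef
  have hl : 0 < l := by positivity
  have hlT : l * T = r / a := by
    rw [hTdef, hldef, div_mul_div_comm, div_eq_div_iff (by positivity) ha.ne']; ring
  have he : 0 < 1 / c := by positivity
  -- √(K/c) = k / c
  have hkc : Real.sqrt (K / c) = k / c := by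
    rw [hkdef, show c * K = (K / c) * c^2 by field_simp,
      Real.sqrt_mul (by positivity), Real.sqrt_sq hc.le]
    field_simp
  -- substitution
  have hsub : (∫ τ in (0:ℝ)..(r / a), Real.sinh (k * τ) ^ (1 / c))
      = l * ∫ τ in (0:ℝ)..T, Real.sinh (k * (l * τ)) ^ (1 / c) := by
    rw [intervalIntegral.integral_comp_mul_left (fun τ => Real.sinh (k * τ) ^ (1/c)) hl.ne']
    rw [mul_zero, hlT, smul_eq_mul, ← mul_assoc, mul_inv_cancel₀ hl.ne', one_mul]
  -- continuity
  have cont : ∀ m : ℝ, Continuous (fun τ : ℝ => Real.sinh (m * τ) ^ (1 / c)) := fun m =>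
    (Real.continuous_rpow_const he.le).comp (Real.continuous_sinh.comp (continuous_const.mul continuous_id))
  -- pointwise bound
  set E := l ^ (1/c) * Real.exp (Real.sqrt (K / c) * r / a) with hEdef
  have hE : 0 ≤ E := by positivity
  have hpt : ∀ τ ∈ Set.Icc (0:ℝ) T,
      Real.sinh (k * (l * τ)) ^ (1 / c) ≤ E * Real.sinh (k * τ) ^ (1 / c) := by
    intro τ hτ
    obtain ⟨hτ0, hτT⟩ := hτ
    have hy : 0 ≤ k * τ := by positivity
    have h1 : Real.sinh (l * (k * τ)) ≤ l * Real.sinh (k * τ) * Real.exp (l * (k * τ)) :=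
      sinh_mul_le hl.le hy
    have h2 : Real.exp (l * (k * τ)) ≤ Real.exp (l * (k * T)) := by
      apply Real.exp_le_exp.2
      have := mul_le_mul_of_nonneg_left hτT hk.le
      nlinarith
    have h3 : Real.sinh (k * (l * τ)) ≤ l * Real.sinh (k * τ) * Real.exp (l * (k * T)) := by
      have hs0 : 0 ≤ Real.sinh (k * τ) := Real.sinh_nonneg_iff.2 hy
      calc Real.sinh (k * (l * τ)) = Real.sinh (l * (k * τ)) := by ring_nf
        _ ≤ l * Real.sinh (k * τ) * Real.exp (l * (k * τ)) := h1
        _ ≤ l * Real.sinh (k * τ) * Real.exp (l * (k * T)) := by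
            apply mul_le_mul_of_nonneg_left h2 (by positivity)
    have hbase : 0 ≤ Real.sinh (k * (l * τ)) := Real.sinh_nonneg_iff.2 (by positivity)
    have := Real.rpow_le_rpow hbase h3 he.le
    refine this.trans_eq ?_
    rw [Real.mul_rpow (by positivity) (Real.exp_pos _).le,
      Real.mul_rpow hl.le (Real.sinh_nonneg_iff.2 hy), ← Real.exp_mul, hEdef]
    have : l * (k * T) * (1 / c) = Real.sqrt (K / c) * r / a := by
      rw [show l * (k * T) * (1 / c) = k / c * (l * T) by ring, hlT, ← hkc, mul_div_assoc]
    rw [this]; ring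
  -- integrability
  have hint1 : IntervalIntegrable (fun τ => Real.sinh (k * (l * τ)) ^ (1 / c))
      MeasureTheory.volume 0 T := by
    have : Continuous (fun τ : ℝ => Real.sinh (k * (l * τ)) ^ (1 / c)) := by
      have := (cont (k * l))
      simpa [mul_assoc] using this
    exact this.intervalIntegrable 0 T
  have hint2 : IntervalIntegrable (fun τ => E * Real.sinh (k * τ) ^ (1 / c))
      MeasureTheory.volume 0 T := (continuous_const.mul (cont k)).intervalIntegrable 0 T
  have hmono : (∫ τ in (0:ℝ)..T, Real.sinh (k * (l * τ)) ^ (1 / c))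
      ≤ ∫ τ in (0:ℝ)..T, E * Real.sinh (k * τ) ^ (1 / c) :=
    intervalIntegral.integral_mono_on hT.le hint1 hint2 hpt
  rw [hsub, intervalIntegral.integral_const_mul] at *
  -- constant identity
  have hconst : (b / a) ^ (1 + 1 / c) * (r / s) ^ (1 + 1 / c) = l * l ^ (1 / c) := by
    rw [← Real.mul_rpow (by positivity) (by positivity),
      show b / a * (r / s) = l by rw [hldef]; field_simp,
      Real.rpow_add hl, Real.rpow_one]
  calc l * ∫ τ in (0:ℝ)..T, Real.sinh (k * (l * τ)) ^ (1 / c)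
      ≤ l * (E * ∫ τ in (0:ℝ)..T, Real.sinh (k * τ) ^ (1 / c)) := by
        apply mul_le_mul_of_nonneg_left hmono hl.le
    _ = (b / a) ^ (1 + 1 / c) * (r / s) ^ (1 + 1 / c) * Real.exp (Real.sqrt (K / c) * r / a) *
        ∫ τ in (0:ℝ)..T, Real.sinh (k * τ) ^ (1 / c) := by
        rw [hconst, hEdef]; ring
end

section
/- Let ν > 2, 0 < p < 2, and z ≥ 0, w ≥ 0 with z + w > 0 be real numbers. Then the infinite product ∏_{j=1}^{∞} (z + w·4^j)^{(ν/4)·(1−p/2)^{j−1}} converges (the partial products have a limit in (0,∞)), and its value is at most (z+w)^{ν/(2p)} · 2^{2ν/p²}. -/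
/-! The logarithm of the `j`-th factor lies between `log (z + w)` and `log (z + w) + j log 4`,
because `z + w ≤ z + w 4^j ≤ 4^j (z + w)`. Hence the logarithm of the product is a series
squeezed between two series of the form `∑ (A + B (i + 1)) rⁱ` with `r = 1 - p/2`; it therefore
converges, and `∑ rⁱ = 2/p`, `∑ (i + 1) rⁱ = 4/p²` evaluate the upper one to
`ν/(2p) log (z + w) + 2ν/p² log 2`. -/

open Filter Finset Real

lemma prod_Icc_one_eq_prod_range {M : Type*} [CommMonoid M] (f : ℕ → M) (k : ℕ) :
    ∏ j ∈ Icc 1 k, f j = ∏ i ∈ range k, f (i + 1) := by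
  rw [← Ico_add_one_right_eq_Icc, prod_Ico_eq_prod_range, Nat.add_sub_cancel]
  exact prod_congr rfl fun i _ => by rw [add_comm]

lemma hasSum_affine_mul_geometric {r : ℝ} (hr : |r| < 1) (A B : ℝ) :
    HasSum (fun i : ℕ => r ^ i * (A + B * (i + 1))) (A / (1 - r) + B / (1 - r) ^ 2) := by
  have hgeom := (hasSum_geometric_of_abs_lt_one hr).mul_left A
  have hsucc := (hasSum_choose_mul_geometric_of_norm_lt_one 1 (r := r)
    (by rwa [Real.norm_eq_abs])).mul_left B
  rw [show A / (1 - r) + B / (1 - r) ^ 2 = A * (1 - r)⁻¹ + B * (1 / (1 - r) ^ (1 + 1)) by ring]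
  refine (hgeom.add hsucc).congr_fun fun i => ?_
  push_cast [Nat.choose_one_right]
  ring

lemma summable_of_le_of_le {ι : Type*} {f l u : ι → ℝ} (hl : Summable l) (hu : Summable u)
    (hlf : ∀ i, l i ≤ f i) (hfu : ∀ i, f i ≤ u i) : Summable f := by
  have hdiff : Summable (fun i => f i - l i) :=
    Summable.of_nonneg_of_le (fun i => sub_nonneg.2 (hlf i))
      (fun i => sub_le_sub_right (hfu i) _) (hu.sub hl)
  simpa using hdiff.add hl

lemma tendsto_prod_range_rpow_of_hasSum {a e : ℕ → ℝ} {S : ℝ} (ha : ∀ i, 0 < a i)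
    (h : HasSum (fun i => e i * log (a i)) S) :
    Tendsto (fun k => ∏ i ∈ range k, a i ^ e i) atTop (nhds (exp S)) := by
  have hprod : ∀ k, exp (∑ i ∈ range k, e i * log (a i)) = ∏ i ∈ range k, a i ^ e i := by
    intro k
    rw [exp_sum]
    exact prod_congr rfl fun i _ => by rw [rpow_def_of_pos (ha i), mul_comm]
  exact ((continuous_exp.tendsto S).comp h.tendsto_sum_nat).congr hprod

lemma log_add_le_log_add_mul {z w c : ℝ} (hw : 0 ≤ w) (hzw : 0 < z + w) (hc : 1 ≤ c) :
    log (z + w) ≤ log (z + w * c) :=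
  log_le_log hzw (by nlinarith)

lemma log_add_mul_le {z w c : ℝ} (hz : 0 ≤ z) (hw : 0 ≤ w) (hzw : 0 < z + w) (hc : 1 ≤ c) :
    log (z + w * c) ≤ log (z + w) + log c := by
  rw [← log_mul hzw.ne' (by positivity)]
  exact log_le_log (by nlinarith) (by nlinarith)

lemma hasSum_moser_log_majorant {ν p : ℝ} (hp0 : 0 < p) (hp4 : p < 4) (c : ℝ) :
    HasSum (fun i : ℕ => ν / 4 * (1 - p / 2) ^ i * (c + (i + 1) * log 4))
      (ν / (2 * p) * c + 2 * ν / p ^ 2 * log 2) := by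
  have hr : |1 - p / 2| < 1 := abs_lt.2 ⟨by linarith, by linarith⟩
  convert hasSum_affine_mul_geometric hr (ν / 4 * c) (ν / 4 * log 4) using 1
  · ext i
    ring
  · rw [sub_sub_cancel, show (4 : ℝ) = 2 ^ 2 by norm_num, log_pow]
    field_simp
    ring

/-- Moser-iteration product estimate (3.31) for small exponents: for `ν > 2`, `0 < p < 2`,
`z, w ≥ 0` with `z + w > 0`, the infinite product
`∏_{j=1}^∞ (z + w·4^j)^((ν/4)·(1−p/2)^(j−1))` converges to a positive limit bounded by
`(z+w)^(ν/(2p)) · 2^(2ν/p²)`. -/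
theorem moser_product_estimate_small_p (ν p z w : ℝ) (hν : 2 < ν) (hp0 : 0 < p) (hp2 : p < 2)
    (hz : 0 ≤ z) (hw : 0 ≤ w) (hzw : 0 < z + w) :
    ∃ L : ℝ, 0 < L ∧
      Tendsto (fun k : ℕ =>
          ∏ j ∈ Finset.Icc 1 k, (z + w * 4 ^ j) ^ ((ν / 4) * (1 - p / 2) ^ (j - 1)))
        atTop (nhds L) ∧
      L ≤ (z + w) ^ (ν / (2 * p)) * (2 : ℝ) ^ (2 * ν / p ^ 2) := by
  have he : ∀ i : ℕ, 0 ≤ ν / 4 * (1 - p / 2) ^ i := fun i => by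
    have : 0 ≤ 1 - p / 2 := by linarith
    positivity
  have hpow : ∀ i : ℕ, (1 : ℝ) ≤ 4 ^ (i + 1) := fun i => one_le_pow₀ (by norm_num)
  have hupper := hasSum_moser_log_majorant (ν := ν) hp0 (by linarith) (log (z + w))
  have hr : |1 - p / 2| < 1 := abs_lt.2 ⟨by linarith, by linarith⟩
  have hlower : Summable (fun i : ℕ => ν / 4 * (1 - p / 2) ^ i * log (z + w)) :=
    ((summable_geometric_of_abs_lt_one hr).mul_left _).mul_right _
  have hlow : ∀ i : ℕ, ν / 4 * (1 - p / 2) ^ i * log (z + w)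
      ≤ ν / 4 * (1 - p / 2) ^ i * log (z + w * 4 ^ (i + 1)) :=
    fun i => mul_le_mul_of_nonneg_left (log_add_le_log_add_mul hw hzw (hpow i)) (he i)
  have hup : ∀ i : ℕ, ν / 4 * (1 - p / 2) ^ i * log (z + w * 4 ^ (i + 1))
      ≤ ν / 4 * (1 - p / 2) ^ i * (log (z + w) + (i + 1) * log 4) := fun i =>
    mul_le_mul_of_nonneg_left (by simpa [log_pow] using log_add_mul_le hz hw hzw (hpow i)) (he i)
  have hsum := summable_of_le_of_le hlower hupper.summable hlow hup
  refine ⟨exp (∑' i, ν / 4 * (1 - p / 2) ^ i * log (z + w * 4 ^ (i + 1))), exp_pos _, ?_, ?_⟩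
  · simp only [prod_Icc_one_eq_prod_range, Nat.add_sub_cancel]
    exact tendsto_prod_range_rpow_of_hasSum (fun i => by nlinarith [hpow i]) hsum.hasSum
  · calc exp (∑' i, ν / 4 * (1 - p / 2) ^ i * log (z + w * 4 ^ (i + 1)))
        ≤ exp (ν / (2 * p) * log (z + w) + 2 * ν / p ^ 2 * log 2) :=
          exp_le_exp.2 (hasSum_le hup hsum.hasSum hupper)
      _ = (z + w) ^ (ν / (2 * p)) * (2 : ℝ) ^ (2 * ν / p ^ 2) := by
          rw [exp_add, rpow_def_of_pos hzw, rpow_def_of_pos two_pos, mul_comm (log (z + w)),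
            mul_comm (log 2)]
end

section
/- Let n ≥ 1, let γ ≥ 1 and A ≥ 0 be real numbers, let u : EuclideanSpace ℝ (Fin n) → ℝ be a smooth strictly positive function satisfying Δu(x) ≥ −A·u(x) for all x, and let φ : EuclideanSpace ℝ (Fin n) → ℝ be a smooth function with compact support. Then ∫ ‖∇(φ·u^γ)(x)‖² dx ≤ ∫ ‖∇φ(x)‖² · u(x)^(2γ) dx + γ·A·∫ φ(x)² · u(x)^(2γ) dx, where integration is with respect to the Lebesgue (volume) measure. -/
/-- The Laplacian of `f : ℝⁿ → ℝ` at `x`: the sum of the second partial derivatives in the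
standard orthonormal coordinate directions (the trace of the second derivative). -/
noncomputable def laplacian {n : ℕ} (f : EuclideanSpace ℝ (Fin n) → ℝ)
    (x : EuclideanSpace ℝ (Fin n)) : ℝ :=
  ∑ i : Fin n, fderiv ℝ (fun y => fderiv ℝ f y (EuclideanSpace.single i 1)) x
    (EuclideanSpace.single i 1)

open MeasureTheory Real

noncomputable def pderiv {n : ℕ} (f : EuclideanSpace ℝ (Fin n) → ℝ)
    (x : EuclideanSpace ℝ (Fin n)) (i : Fin n) : ℝ :=
  fderiv ℝ f x (EuclideanSpace.single i 1)

lemma norm_grad_sq {n : ℕ} (f : EuclideanSpace ℝ (Fin n) → ℝ) (x : EuclideanSpace ℝ (Fin n)) :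
    ‖gradient f x‖ ^ 2 = ∑ i : Fin n, pderiv f x i ^ 2 := by
  have hcoord : ∀ i, gradient f x i = pderiv f x i := by
    intro i
    have h1 : (inner ℝ (EuclideanSpace.single i (1:ℝ)) (gradient f x) : ℝ) = gradient f x i := by
      rw [EuclideanSpace.inner_single_left]; simp
    rw [← h1, real_inner_comm]
    exact InnerProductSpace.toDual_symm_apply
  rw [EuclideanSpace.norm_eq, Real.sq_sqrt (by positivity)]
  simp [hcoord, Real.norm_eq_abs, sq_abs]

lemma contDiff_pderiv {n : ℕ} {f : EuclideanSpace ℝ (Fin n) → ℝ} (hf : ContDiff ℝ (⊤ : ℕ∞) f)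
    (i : Fin n) : ContDiff ℝ (⊤ : ℕ∞) (fun x => pderiv f x i) :=
  (hf.fderiv_right (by simp)).clm_apply contDiff_const

lemma contDiff_rpow_pos {n : ℕ} {u : EuclideanSpace ℝ (Fin n) → ℝ} (hu : ContDiff ℝ (⊤ : ℕ∞) u)
    (hupos : ∀ x, 0 < u x) (c : ℝ) : ContDiff ℝ (⊤ : ℕ∞) (fun x => u x ^ c) := by
  rw [contDiff_iff_contDiffAt]
  exact fun x => (hu.contDiffAt).rpow_const_of_ne (hupos x).ne'

lemma pderiv_rpow {n : ℕ} {u : EuclideanSpace ℝ (Fin n) → ℝ} (hu : ContDiff ℝ (⊤ : ℕ∞) u)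
    (hupos : ∀ x, 0 < u x) (c : ℝ) (x : EuclideanSpace ℝ (Fin n)) (i : Fin n) :
    pderiv (fun y => u y ^ c) x i = c * u x ^ (c - 1) * pderiv u x i := by
  have h := ((hu.differentiable (by simp) x).hasFDerivAt.rpow_const (p := c)
    (Or.inl (hupos x).ne')).fderiv
  unfold pderiv
  rw [h]; simp [mul_assoc]

lemma pderiv_mul {n : ℕ} {f g : EuclideanSpace ℝ (Fin n) → ℝ} {x : EuclideanSpace ℝ (Fin n)}
    (hf : DifferentiableAt ℝ f x) (hg : DifferentiableAt ℝ g x) (i : Fin n) :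
    pderiv (fun y => f y * g y) x i = f x * pderiv g x i + g x * pderiv f x i := by
  unfold pderiv
  rw [fderiv_fun_mul hf hg]; simp

/-- Moser-iteration energy inequality (3.18), Euclidean case: if `u > 0` is smooth with
`Δu ≥ −Au` and `φ` is smooth with compact support, then for `γ ≥ 1`,
`∫ |∇(φ·u^γ)|² ≤ ∫ |∇φ|²·u^(2γ) + γ·A·∫ φ²·u^(2γ)`. -/
theorem moser_energy_inequality (n : ℕ) (hn : 1 ≤ n) (γ A : ℝ) (hγ : 1 ≤ γ) (hA : 0 ≤ A)
    (u φ : EuclideanSpace ℝ (Fin n) → ℝ)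
    (hu : ContDiff ℝ (⊤ : ℕ∞) u) (hupos : ∀ x, 0 < u x)
    (hΔu : ∀ x, -A * u x ≤ laplacian u x)
    (hφ : ContDiff ℝ (⊤ : ℕ∞) φ) (hφsupp : HasCompactSupport φ) :
    ∫ x, ‖gradient (fun y => φ y * u y ^ γ) x‖ ^ 2 ≤
      (∫ x, ‖gradient φ x‖ ^ 2 * u x ^ (2 * γ)) +
        γ * A * ∫ x, φ x ^ 2 * u x ^ (2 * γ) := by
  have hγ0 : (0:ℝ) ≤ γ := le_trans zero_le_one hγ
  have hu' : Differentiable ℝ u := hu.differentiable (by simp)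
  have hφ' : Differentiable ℝ φ := hφ.differentiable (by simp)
  set h : EuclideanSpace ℝ (Fin n) → ℝ := fun x => γ * (φ x ^ 2 * u x ^ (2*γ - 1)) with hh_def
  -- smoothness
  have hv : ContDiff ℝ (⊤ : ℕ∞) (fun x => u x ^ γ) := contDiff_rpow_pos hu hupos γ
  have hφv : ContDiff ℝ (⊤ : ℕ∞) (fun x => φ x * u x ^ γ) := hφ.mul hv
  have hh : ContDiff ℝ (⊤ : ℕ∞) h :=
    contDiff_const.mul ((hφ.pow 2).mul (contDiff_rpow_pos hu hupos _))
  -- support lemmas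
  have hts : ∀ (w : EuclideanSpace ℝ (Fin n) → ℝ), (∀ y, φ y = 0 → w y = 0) →
      tsupport w ⊆ tsupport φ := by
    intro w hw
    apply closure_minimal _ (isClosed_tsupport φ)
    intro y hy
    by_contra hc
    exact hy (hw y (image_eq_zero_of_notMem_tsupport hc))
  have hpd0 : ∀ (w : EuclideanSpace ℝ (Fin n) → ℝ), tsupport w ⊆ tsupport φ →
      ∀ x, x ∉ tsupport φ → ∀ i, pderiv w x i = 0 := by
    intro w hws x hx i
    have h0 : fderiv ℝ w x = 0 :=
      image_eq_zero_of_notMem_tsupport (fun hmem => hx (hws (tsupport_fderiv_subset ℝ hmem)))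
    unfold pderiv
    rw [h0]; rfl
  have htsh : tsupport h ⊆ tsupport φ := hts h (by intro y hy; simp [hh_def, hy])
  have htsφv : tsupport (fun y => φ y * u y ^ γ) ⊆ tsupport φ :=
    hts _ (by intro y hy; simp [hy])
  have hφ0 : ∀ x, x ∉ tsupport φ → φ x = 0 := fun x hx => image_eq_zero_of_notMem_tsupport hx
  have hh0 : ∀ x, x ∉ tsupport φ → h x = 0 := by
    intro x hx; simp [hh_def, hφ0 x hx]
  -- integrability helper
  have hint : ∀ (f : EuclideanSpace ℝ (Fin n) → ℝ), Continuous f →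
      (∀ x, x ∉ tsupport φ → f x = 0) → Integrable f volume := by
    intro f hc h0
    exact hc.integrable_of_hasCompactSupport (HasCompactSupport.intro hφsupp h0)
  -- continuity facts
  have hcDu : ∀ i, Continuous fun x => pderiv u x i := fun i => (contDiff_pderiv hu i).continuous
  have hcDφ : ∀ i, Continuous fun x => pderiv φ x i := fun i => (contDiff_pderiv hφ i).continuous
  have hcDh : ∀ i, Continuous fun x => pderiv h x i := fun i => (contDiff_pderiv hh i).continuous
  have hcDφv : ∀ i, Continuous fun x => pderiv (fun y => φ y * u y ^ γ) x i :=
    fun i => (contDiff_pderiv hφv i).continuous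
  have hcDDu : ∀ i, Continuous fun x => pderiv (fun y => pderiv u y i) x i :=
    fun i => (contDiff_pderiv (contDiff_pderiv hu i) i).continuous
  have hcU : ∀ c : ℝ, Continuous fun x => u x ^ c :=
    fun c => (contDiff_rpow_pos hu hupos c).continuous
  -- pderiv formula for h
  have hDh : ∀ x i, pderiv h x i = γ * (2 * φ x * pderiv φ x i) * u x ^ (2*γ-1)
      + γ * (2*γ-1) * (φ x ^ 2 * u x ^ (2*γ-2) * pderiv u x i) := by
    intro x i
    have h2 : pderiv (fun y => φ y ^ 2) x i = φ x * pderiv φ x i + φ x * pderiv φ x i := by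
      have : (fun y => φ y ^ 2) = fun y => φ y * φ y := by ext y; ring
      rw [this, pderiv_mul (hφ' x) (hφ' x)]
    have h3 : pderiv (fun y => u y ^ (2*γ-1)) x i
        = (2*γ-1) * u x ^ (2*γ-2) * pderiv u x i := by
      rw [pderiv_rpow hu hupos (2*γ-1) x i,
        show (2*γ-1-1 : ℝ) = 2*γ-2 by ring]
    have h4 : pderiv h x i = γ * pderiv (fun y => φ y ^ 2 * u y ^ (2*γ-1)) x i := by
      have := pderiv_mul (f := fun _ => γ)
        (g := fun y => φ y ^ 2 * u y ^ (2*γ-1)) (x := x)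
        (differentiableAt_const γ)
        (((hφ.pow 2).mul (contDiff_rpow_pos hu hupos _)).differentiable (by simp) x) i
      simpa [pderiv, hh_def] using this
    rw [h4, pderiv_mul (f := fun y => φ y ^ 2) (((hφ'.pow 2)) x) ((contDiff_rpow_pos hu hupos _).differentiable (by simp) x) i, h2, h3]
    ring
  -- laplacian as sum of pderivs
  have hlap : ∀ x, laplacian u x = ∑ i, pderiv (fun y => pderiv u y i) x i := fun x => rfl
  -- pderiv of φ * u^γ
  have hDφv : ∀ x i, pderiv (fun y => φ y * u y ^ γ) x i
      = φ x * (γ * u x ^ (γ-1) * pderiv u x i) + u x ^ γ * pderiv φ x i := by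
    intro x i
    rw [pderiv_mul (hφ' x) (hv.differentiable (by simp) x) i, pderiv_rpow hu hupos γ x i]
  -- key pointwise inequality
  have key : ∀ x, (∑ i, pderiv (fun y => φ y * u y ^ γ) x i ^ 2)
      ≤ (∑ i, pderiv φ x i ^ 2) * u x ^ (2*γ) + ∑ i, pderiv h x i * pderiv u x i := by
    intro x
    rw [Finset.sum_mul, ← Finset.sum_add_distrib]
    apply Finset.sum_le_sum
    intro i _
    rw [hDφv x i, hDh x i]
    have hU := hupos x
    have e1 : u x ^ (γ-1) * u x ^ γ = u x ^ (2*γ-1) := by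
      rw [← Real.rpow_add hU]; ring_nf
    have e2 : u x ^ (γ-1) * u x ^ (γ-1) = u x ^ (2*γ-2) := by
      rw [← Real.rpow_add hU]; ring_nf
    have e3 : u x ^ γ * u x ^ γ = u x ^ (2*γ) := by
      rw [← Real.rpow_add hU]; ring_nf
    rw [← e1, ← e2, ← e3]
    nlinarith [mul_nonneg (mul_nonneg hγ0 (sub_nonneg.2 hγ))
      (sq_nonneg (φ x * u x ^ (γ-1) * pderiv u x i))]
  -- integrability
  have hIφv : Integrable (fun x => ∑ i, pderiv (fun y => φ y * u y ^ γ) x i ^ 2) volume :=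
    hint _ (continuous_finset_sum _ fun i _ => (hcDφv i).pow 2)
      (fun x hx => Finset.sum_eq_zero fun i _ => by rw [hpd0 _ htsφv x hx i]; simp)
  have hIa : Integrable (fun x => (∑ i, pderiv φ x i ^ 2) * u x ^ (2*γ)) volume :=
    hint _ ((continuous_finset_sum _ fun i _ => (hcDφ i).pow 2).mul (hcU _))
      (fun x hx => by
        have : ∀ i ∈ Finset.univ, pderiv φ x i ^ 2 = 0 := fun i _ => by
          rw [hpd0 φ subset_rfl x hx i]; simp
        rw [Finset.sum_congr rfl this]; simp)
  have hI3i : ∀ i, Integrable (fun x => pderiv h x i * pderiv u x i) volume :=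
    fun i => hint _ ((hcDh i).mul (hcDu i))
      (fun x hx => by rw [hpd0 h htsh x hx i]; ring)
  have hI3 : Integrable (fun x => ∑ i, pderiv h x i * pderiv u x i) volume :=
    hint _ (continuous_finset_sum _ fun i _ => (hcDh i).mul (hcDu i))
      (fun x hx => Finset.sum_eq_zero fun i _ => by rw [hpd0 h htsh x hx i]; ring)
  have hIb : Integrable (fun x => φ x ^ 2 * u x ^ (2*γ)) volume :=
    hint _ ((hφ.continuous.pow 2).mul (hcU _)) (fun x hx => by simp [hφ0 x hx])
  have hIhDD : ∀ i, Integrable (fun x => -(h x * pderiv (fun y => pderiv u y i) x i)) volume :=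
    fun i => hint _ ((hh.continuous.mul (hcDDu i)).neg) (fun x hx => by simp [hh0 x hx])
  have hLcont : Continuous (laplacian u) := by
    have : laplacian u = fun x => ∑ i, pderiv (fun y => pderiv u y i) x i := funext hlap
    rw [this]
    exact continuous_finset_sum _ fun i _ => hcDDu i
  have hIhL : Integrable (fun x => -(h x * laplacian u x)) volume :=
    hint _ ((hh.continuous.mul hLcont).neg) (fun x hx => by simp [hh0 x hx])
  -- integration by parts
  have ibp : ∀ i, ∫ x, pderiv h x i * pderiv u x i
      = ∫ x, -(h x * pderiv (fun y => pderiv u y i) x i) := by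
    intro i
    have H := integral_mul_fderiv_eq_neg_fderiv_mul_of_integrable
      (μ := volume) (f := h) (g := fun y => fderiv ℝ u y (EuclideanSpace.single i 1))
      (v := EuclideanSpace.single i 1)
      (by simpa [pderiv] using hI3i i)
      (by simpa [pderiv] using
        (hint (fun x => h x * pderiv (fun y => pderiv u y i) x i) (hh.continuous.mul (hcDDu i)) (fun x hx => by simp [hh0 x hx])))
      (hint _ (hh.continuous.mul (hcDu i)) (fun x hx => by simp [hh0 x hx]))
      (fun x _ => hh.differentiable (by simp) x) (fun x _ => (contDiff_pderiv hu i).differentiable (by simp) x)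
    rw [integral_neg]
    unfold pderiv
    unfold pderiv at H
    linarith [H]
  -- sum the IBP identities
  have hsum : ∫ x, ∑ i, pderiv h x i * pderiv u x i = ∫ x, -(h x * laplacian u x) := by
    rw [integral_finset_sum _ (fun i _ => hI3i i),
      Finset.sum_congr rfl (fun i _ => ibp i),
      ← integral_finset_sum _ (fun i _ => hIhDD i)]
    congr 1
    ext x
    rw [hlap x, Finset.mul_sum]
    simp
  -- final estimate
  have hfinal : ∫ x, -(h x * laplacian u x) ≤ γ * A * ∫ x, φ x ^ 2 * u x ^ (2*γ) := by
    rw [← MeasureTheory.integral_const_mul]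
    apply integral_mono hIhL (hIb.const_mul _)
    intro x
    have e4 : u x ^ (2*γ-1) * u x = u x ^ (2*γ) := by
      have h5 := Real.rpow_add (hupos x) (2*γ-1) 1
      rw [Real.rpow_one] at h5
      rw [← h5, show (2*γ-1+1 : ℝ) = 2*γ by ring]
    have hhx : 0 ≤ h x := mul_nonneg hγ0
      (mul_nonneg (sq_nonneg _) (Real.rpow_nonneg (hupos x).le _))
    have hmul := mul_le_mul_of_nonneg_left (hΔu x) hhx
    calc -(h x * laplacian u x) ≤ -(h x * (-A * u x)) := neg_le_neg hmul
      _ = γ * A * (φ x ^ 2 * (u x ^ (2*γ-1) * u x)) := by simp only [hh_def]; ring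
      _ = γ * A * (φ x ^ 2 * u x ^ (2*γ)) := by rw [e4]
  -- put everything together
  simp only [norm_grad_sq]
  calc ∫ x, ∑ i, pderiv (fun y => φ y * u y ^ γ) x i ^ 2
      ≤ ∫ x, ((∑ i, pderiv φ x i ^ 2) * u x ^ (2*γ) + ∑ i, pderiv h x i * pderiv u x i) :=
        integral_mono hIφv (hIa.add hI3) key
    _ = (∫ x, (∑ i, pderiv φ x i ^ 2) * u x ^ (2*γ))
        + ∫ x, ∑ i, pderiv h x i * pderiv u x i := integral_add hIa hI3
    _ ≤ (∫ x, (∑ i, pderiv φ x i ^ 2) * u x ^ (2*γ))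
        + γ * A * ∫ x, φ x ^ 2 * u x ^ (2*γ) := by
        rw [hsum]; exact add_le_add_right hfinal _
end
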